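/- For every parameter a with 1 < a < 3 and every initial value x₀ ∈ (0,1), the iterates f_a^[n](x₀) of the logistic map converge to the equilibrium (a−1)/a as n → ∞; almost all (indeed all interior) initial populations evolve to this equilibrium population. -/

import Mathlib

private lemma logistic_cubic_aux (b u : ℝ) (hb0 : 0 ≤ b) (hb1 : b < 1) (hu1 : u < 1)
    (hum : 1-(2+b)^2/4 ≤ u) : u^3 + b*u^2 - b*u + 1 > 0 := by
  have h53 : (0:ℝ) ≤ u + 5/3 := by nlinarith
  nlinarith [mul_nonneg (sq_nonneg (u-1/3)) h53, mul_nonneg (sub_nonneg.2 hb1.le) (sq_nonneg u),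
    sq_nonneg (u-1/3), mul_nonneg hb0 (sq_nonneg (u-1/2)),
    mul_nonneg (mul_nonneg (sub_nonneg.2 hb1.le) hb0) (sq_nonneg u)]

private lemma logistic_wsq_lt_one (a x : ℝ) (ha1 : 1 < a) (ha3 : a < 3)
    (hx : 0 < x) (hx4 : x ≤ a/4) :
    ((1-a*x)*(1-a*(a*x*(1-x))))^2 < 1 := by
  have ha0 : (0:ℝ) < a := by linarith
  have hax : 0 < a*x := mul_pos ha0 hx
  have hu1 : 1 - a*x < 1 := by linarith
  have hum : 1-(2+(a-2))^2/4 ≤ 1 - a*x := by nlinarith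
  have h1 : 0 < 1 + (1-a*x)*(1-a*(a*x*(1-x))) := by
    have hid : 1 + (1-a*x)*(1-a*(a*x*(1-x)))
        = (1-a*x)^3 + (a-2)*(1-a*x)^2 - (a-2)*(1-a*x) + 1 := by ring
    rw [hid]
    rcases le_or_gt 2 a with h2 | h2
    · exact logistic_cubic_aux (a-2) (1-a*x) (by linarith) (by linarith) hu1 hum
    · -- a < 2 : u ∈ [0,1), c = 2-a ≥ 0
      have hu0 : 0 ≤ 1 - a*x := by nlinarith
      have hc : 0 ≤ 2 - a := by linarith
      have e1 : 0 ≤ (1-a*x)^3 := pow_nonneg hu0 3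
      have e2 : 0 ≤ (2-a)*((1-a*x)*(1-(1-a*x))) := by
        apply mul_nonneg hc (mul_nonneg hu0 (by linarith))
      nlinarith [e1, e2]
  have h2 : 0 < 1 - (1-a*x)*(1-a*(a*x*(1-x))) := by
    have hid : 1 - (1-a*x)*(1-a*(a*x*(1-x)))
        = (a*x)*((1-a*x)^2 + (a-1)*(1-a*x) + 1) := by ring
    rw [hid]
    apply mul_pos hax
    nlinarith [sq_nonneg (1-a*x+(a-1)/2)]
  nlinarith [h1, h2]

/-- For `1 < a < 3` and every initial value `x₀ ∈ (0,1)`, the iterates of the logistic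
map converge to the equilibrium `(a-1)/a`. -/
theorem logistic_converges_to_equilibrium (a : ℝ) (ha₁ : 1 < a) (ha₃ : a < 3)
    (x₀ : ℝ) (hx₀ : x₀ ∈ Set.Ioo (0 : ℝ) 1) :
    Filter.Tendsto (fun n : ℕ => (fun x : ℝ => a * x * (1 - x))^[n] x₀)
      Filter.atTop (nhds ((a - 1) / a)) := by
  have ha0 : (0:ℝ) < a := by linarith
  set f : ℝ → ℝ := fun x : ℝ => a * x * (1 - x) with hf
  set p : ℝ := (a - 1) / a with hp
  have hap : a * p = a - 1 := by rw [hp]; field_simp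
  have hp0 : 0 < p := div_pos (by linarith) ha0
  have hp1 : p < 1 := by rw [hp, div_lt_one ha0]; linarith
  have ha41 : a / 4 < 1 := by linarith
  -- one step bounds
  have hstep : ∀ x : ℝ, 0 < x → x < 1 → 0 < f x ∧ f x ≤ a / 4 := by
    intro x hx0 hx1
    refine ⟨mul_pos (mul_pos ha0 hx0) (by linarith), ?_⟩
    show a * x * (1 - x) ≤ a / 4
    nlinarith [sq_nonneg (1 - 2*x)]
  -- fixed point identity
  have hI : ∀ x : ℝ, f x - p = (x - p) * (1 - a * x) := by
    intro x; simp only [hf]; linear_combination (-x) * hap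
  have hI2 : ∀ x : ℝ, f (f x) - p = (x - p) * ((1 - a*x) * (1 - a * f x)) := by
    intro x
    have := hI (f x)
    rw [this, hI x]; ring
  -- invariant compact set
  set μ : ℝ := min (min (f x₀) p) (f (a/4)) with hμ
  have hfx₀ := hstep x₀ hx₀.1 hx₀.2
  have hfa4 : 0 < f (a/4) := mul_pos (mul_pos ha0 (by linarith)) (by linarith)
  have hμ0 : 0 < μ := lt_min (lt_min hfx₀.1 hp0) hfa4
  have hμp : μ ≤ p := le_trans (min_le_left _ _) (min_le_right _ _)
  have hμf : μ ≤ f x₀ := le_trans (min_le_left _ _) (min_le_left _ _)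
  have hμ4l : μ ≤ f (a/4) := min_le_right _ _
  have hμ4 : μ ≤ a/4 := hμf.trans hfx₀.2
  set K : Set ℝ := Set.Icc μ (a/4) with hK
  have hinv : ∀ x ∈ K, f x ∈ K := by
    rintro x ⟨hxl, hxr⟩
    have hx0 : 0 < x := lt_of_lt_of_le hμ0 hxl
    have hx1 : x < 1 := lt_of_le_of_lt hxr ha41
    refine ⟨?_, (hstep x hx0 hx1).2⟩
    rcases le_or_gt x (1/2) with hhalf | hhalf
    · -- f x ≥ f μ ≥ μ
      have h1 : f μ ≤ f x := by
        have hid : f x - f μ = a * (x - μ) * (1 - x - μ) := by simp only [hf]; ring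
        have h0 : 0 ≤ a * (x - μ) * (1 - x - μ) :=
          mul_nonneg (mul_nonneg ha0.le (by linarith)) (by linarith)
        linarith
      have h2 : μ ≤ f μ := by
        have hid : f μ - μ = a * μ * (p - μ) := by simp only [hf]; linear_combination (-μ) * hap
        nlinarith [mul_nonneg (mul_pos ha0 hμ0).le (sub_nonneg.2 hμp), hid]
      linarith
    · -- f x ≥ f (a/4) ≥ μ
      have h1 : f (a/4) ≤ f x := by
        have hid : f x - f (a/4) = a * (x - a/4) * (1 - x - a/4) := by
          simp only [hf]; ring
        have hx4 : x ≤ a/4 := hxr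
        have hfac : 0 ≤ a * (a/4 - x) * (x + a/4 - 1) :=
          mul_nonneg (mul_nonneg ha0.le (by linarith)) (by linarith)
        nlinarith [hid, hfac]
      linarith
  -- sequence
  set y : ℕ → ℝ := fun n => f^[n] x₀ with hy
  have hysucc : ∀ n, y (n+1) = f (y n) := by
    intro n; simp only [hy, Function.iterate_succ_apply']
  have hyK : ∀ n, y (n+1) ∈ K := by
    intro n
    induction n with
    | zero =>
      rw [hysucc 0]
      simp only [hy, Function.iterate_zero_apply]
      exact ⟨hμf, hfx₀.2⟩
    | succ m ih =>
      rw [hysucc (m+1)]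
      exact hinv _ ih
  -- contraction factor from compactness
  have hKcpt : IsCompact K := isCompact_Icc
  have hKne : K.Nonempty := ⟨y 1, hyK 0⟩
  have hcont : ContinuousOn (fun x : ℝ => ((1 - a*x) * (1 - a * f x))^2) K := by
    simp only [hf]; fun_prop
  obtain ⟨z, hzK, hzmax⟩ := hKcpt.exists_isMaxOn hKne hcont
  set q : ℝ := ((1 - a*z) * (1 - a * f z))^2 with hq
  have hq0 : 0 ≤ q := sq_nonneg _
  have hq1 : q < 1 := by
    have hz0 : 0 < z := lt_of_lt_of_le hμ0 hzK.1
    have := logistic_wsq_lt_one a z ha₁ ha₃ hz0 hzK.2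
    simpa [hq, hf] using this
  -- contraction step
  have hcon : ∀ x ∈ K, (f (f x) - p)^2 ≤ q * (x - p)^2 := by
    intro x hx
    have h1 : (f (f x) - p)^2 = ((1 - a*x) * (1 - a * f x))^2 * (x - p)^2 := by
      rw [hI2 x]; ring
    rw [h1]
    exact mul_le_mul_of_nonneg_right (hzmax hx) (sq_nonneg _)
  -- geometric decay
  set D : ℕ → ℝ := fun n => (y n - p)^2 with hD
  have hdecay : ∀ k : ℕ, D (2*k+1) ≤ q^k * D 1 ∧ D (2*k+2) ≤ q^k * D 2 := by
    intro k
    induction k with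
    | zero => simp
    | succ m ih =>
      constructor
      · have h1 : y (2*(m+1)+1) = f (f (y (2*m+1))) := by
          rw [show 2*(m+1)+1 = (2*m+1)+1+1 by ring, hysucc, hysucc]
        have h2 : D (2*(m+1)+1) ≤ q * D (2*m+1) := by
          simp only [hD, h1]
          have := hcon (y (2*m+1)) (by rw [show 2*m+1 = 2*m+1 by rfl]; exact hyK (2*m))
          exact this
        calc D (2*(m+1)+1) ≤ q * D (2*m+1) := h2
          _ ≤ q * (q^m * D 1) := mul_le_mul_of_nonneg_left ih.1 hq0
          _ = q^(m+1) * D 1 := by ring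
      · have h1 : y (2*(m+1)+2) = f (f (y (2*m+2))) := by
          rw [show 2*(m+1)+2 = (2*m+2)+1+1 by ring, hysucc, hysucc]
        have h2 : D (2*(m+1)+2) ≤ q * D (2*m+2) := by
          simp only [hD, h1]
          exact hcon (y (2*m+2)) (hyK (2*m+1))
        calc D (2*(m+1)+2) ≤ q * D (2*m+2) := h2
          _ ≤ q * (q^m * D 2) := mul_le_mul_of_nonneg_left ih.2 hq0
          _ = q^(m+1) * D 2 := by ring
  -- conclude
  rw [Metric.tendsto_atTop]
  intro ε hε
  set M : ℝ := max (D 1) (D 2) with hM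
  have hM0 : 0 ≤ M := le_trans (sq_nonneg _) (le_max_left _ _)
  have hqk : Filter.Tendsto (fun k : ℕ => q^k * M) Filter.atTop (nhds 0) := by
    simpa using (tendsto_pow_atTop_nhds_zero_of_lt_one hq0 hq1).mul_const M
  have hev : ∀ᶠ k in Filter.atTop, q^k * M < ε^2 := by
    apply hqk.eventually_lt_const
    positivity
  obtain ⟨K₀, hK₀⟩ := Filter.eventually_atTop.mp hev
  refine ⟨2*K₀+1, fun n hn => ?_⟩
  obtain ⟨k, hkK, hcase⟩ : ∃ k, K₀ ≤ k ∧ (n = 2*k+1 ∨ n = 2*k+2) := by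
    refine ⟨(n-1)/2, by omega, by omega⟩
  have hDn : D n < ε^2 := by
    rcases hcase with h | h
    · calc D n = D (2*k+1) := by rw [h]
        _ ≤ q^k * D 1 := (hdecay k).1
        _ ≤ q^k * M := mul_le_mul_of_nonneg_left (le_max_left _ _) (pow_nonneg hq0 k)
        _ < ε^2 := hK₀ k hkK
    · calc D n = D (2*k+2) := by rw [h]
        _ ≤ q^k * D 2 := (hdecay k).2
        _ ≤ q^k * M := mul_le_mul_of_nonneg_left (le_max_right _ _) (pow_nonneg hq0 k)
        _ < ε^2 := hK₀ k hkK
  have : |y n - p| < ε := by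
    simp only [hD] at hDn
    nlinarith [sq_abs (y n - p), abs_nonneg (y n - p), hDn]
  simpa [Real.dist_eq, hy, hp] using this
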